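/- arXiv:2205.14627 — 2 statements merged into one kernel-verified Lean document; each statement's English description precedes it below -/
import Mathlib

section
/- Let φ ∈ L²(ℝ) be compactly supported and bounded, let ν ∈ ℕ and j, n, p, m ∈ ℤ. Then ⟨φ_{j,n} * φ_{j+ν,p}, φ_{j+ν,m}⟩_{L²(ℝ)} = 2^{−j/2} η_ν(m − p − 2^ν n), where * denotes convolution on ℝ. -/
/-!
Statement 4: for φ ∈ L²(ℝ) compactly supported and bounded, ν ∈ ℕ, j,n,p,m ∈ ℤ,
⟨φ_{j,n} * φ_{j+ν,p}, φ_{j+ν,m}⟩_{L²} = 2^{−j/2} η_ν(m − p − 2^ν n).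
-/

open MeasureTheory Real

/-- `φ_{j,n}(x) = 2^{j/2} φ(2^j x − n)`. -/
noncomputable def phiJN (φ : ℝ → ℝ) (j n : ℤ) : ℝ → ℝ :=
  fun x => (2 : ℝ) ^ ((j : ℝ) / 2) * φ ((2 : ℝ) ^ j * x - n)

/-- `η_ν(r) = ∫∫ φ(t) φ(z) φ(z − 2^ν t + r) dz dt`. -/
noncomputable def etaNu (φ : ℝ → ℝ) (ν : ℕ) (r : ℤ) : ℝ :=
  ∫ t : ℝ, ∫ z : ℝ, φ t * φ z * φ (z - (2 : ℝ) ^ ν * t + r)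

/-- Continuous convolution on `ℝ`. -/
noncomputable def conv (f g : ℝ → ℝ) : ℝ → ℝ := fun x => ∫ y, f y * g (x - y)

/-- Change of variables `y ↦ b y - c` on the whole line. -/
lemma integral_comp_mul_sub_aux (g : ℝ → ℝ) (b c : ℝ) :
    ∫ y : ℝ, g (b * y - c) = |b⁻¹| * ∫ t : ℝ, g t := by
  calc ∫ y : ℝ, g (b * y - c)
      = |b⁻¹| • ∫ u : ℝ, g (u - c) :=
        MeasureTheory.Measure.integral_comp_mul_left (fun u => g (u - c)) b
    _ = |b⁻¹| * ∫ t : ℝ, g t := by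
        rw [integral_sub_right_eq_self g c, smul_eq_mul]

lemma qmp_affine_sub_aux (a r : ℝ) :
    MeasureTheory.Measure.QuasiMeasurePreserving
      (fun q : ℝ × ℝ => q.2 - a * q.1 + r)
      ((volume : Measure ℝ).prod volume) volume := by
  apply MeasureTheory.QuasiMeasurePreserving.prod_of_right
  · fun_prop
  · refine Filter.Eventually.of_forall fun t => ?_
    have h : (fun z : ℝ => z - a * t + r) = fun z : ℝ => z + (r - a * t) := by
      funext z; ring
    rw [h]
    exact (measurePreserving_add_right volume (r - a * t)).quasiMeasurePreserving

lemma integrable_G_aux (φ : ℝ → ℝ)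
    (hmeas : AEStronglyMeasurable φ (volume : Measure ℝ))
    (hint : Integrable φ (volume : Measure ℝ))
    {C : ℝ} (hC : ∀ x, |φ x| ≤ C) (a r : ℝ) :
    Integrable (fun q : ℝ × ℝ => φ q.1 * φ q.2 * φ (q.2 - a * q.1 + r))
      ((volume : Measure ℝ).prod volume) := by
  have hC0 : 0 ≤ C := le_trans (abs_nonneg _) (hC 0)
  have h1 : AEStronglyMeasurable (fun q : ℝ × ℝ => φ q.1)
      ((volume : Measure ℝ).prod volume) :=
    hmeas.comp_quasiMeasurePreserving MeasureTheory.Measure.quasiMeasurePreserving_fst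
  have h2 : AEStronglyMeasurable (fun q : ℝ × ℝ => φ q.2)
      ((volume : Measure ℝ).prod volume) :=
    hmeas.comp_quasiMeasurePreserving MeasureTheory.Measure.quasiMeasurePreserving_snd
  have h3 : AEStronglyMeasurable (fun q : ℝ × ℝ => φ (q.2 - a * q.1 + r))
      ((volume : Measure ℝ).prod volume) :=
    hmeas.comp_quasiMeasurePreserving (qmp_affine_sub_aux a r)
  have hmaj : Integrable (fun q : ℝ × ℝ => |φ q.1| * |φ q.2| * C)
      ((volume : Measure ℝ).prod volume) :=
    (hint.abs.mul_prod hint.abs).mul_const C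
  refine hmaj.mono' ((h1.mul h2).mul h3) (Filter.Eventually.of_forall fun q => ?_)
  have : ‖φ q.1 * φ q.2 * φ (q.2 - a * q.1 + r)‖
      = |φ q.1| * |φ q.2| * |φ (q.2 - a * q.1 + r)| := by
    rw [Real.norm_eq_abs, abs_mul, abs_mul]
  rw [this]
  exact mul_le_mul_of_nonneg_left (hC _) (by positivity)

theorem inner_conv_phi_eq_eta (φ : ℝ → ℝ) (hφL2 : MemLp φ 2 volume)
    (hφsupp : HasCompactSupport φ) (hφbdd : ∃ C : ℝ, ∀ x : ℝ, |φ x| ≤ C)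
    (ν : ℕ) (j n p m : ℤ) :
    ∫ x : ℝ, conv (phiJN φ j n) (phiJN φ (j + ν) p) x * phiJN φ (j + ν) m x
      = (2 : ℝ) ^ (-(j : ℝ) / 2) * etaNu φ ν (m - p - 2 ^ ν * n) := by
  obtain ⟨C, hC⟩ := hφbdd
  -- basic data
  have hφint : Integrable φ (volume : Measure ℝ) := by
    rw [← memLp_one_iff_integrable]
    exact hφL2.mono_exponent_of_measure_support_ne_top
      (s := tsupport φ) (fun x hx => image_eq_zero_of_notMem_tsupport hx)
      hφsupp.measure_lt_top.ne (by norm_num)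
  set a : ℝ := (2 : ℝ) ^ ν with ha_def
  have ha : (0 : ℝ) < a := by positivity
  set b : ℝ := (2 : ℝ) ^ j with hb_def
  have hb : (0 : ℝ) < b := by positivity
  have hba : (2 : ℝ) ^ (j + (ν : ℤ)) = b * a := by
    rw [zpow_add₀ (two_ne_zero) j (ν : ℤ), hb_def, ha_def, zpow_natCast]
  set A : ℝ := (2 : ℝ) ^ ((j : ℝ) / 2) with hA_def
  set B : ℝ := (2 : ℝ) ^ (((j + (ν : ℤ) : ℤ) : ℝ) / 2) with hB_def
  set R : ℝ := ((m - p - 2 ^ ν * n : ℤ) : ℝ) with hR_def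
  have hR : R = (m : ℝ) - p - a * n := by
    rw [hR_def, ha_def]; push_cast; ring
  -- Step 1: the convolution, pointwise
  have hconv : ∀ x : ℝ, conv (phiJN φ j n) (phiJN φ (j + ν) p) x
      = (A * B * b⁻¹) *
        ∫ t : ℝ, φ t * φ ((2 : ℝ) ^ (j + (ν : ℤ)) * x - a * t - a * n - p) := by
    intro x
    have hfun : (fun y : ℝ => phiJN φ j n y * phiJN φ (j + ν) p (x - y))
        = fun y : ℝ => (fun u : ℝ => (A * B) *
            (φ u * φ ((2 : ℝ) ^ (j + (ν : ℤ)) * x - a * u - a * n - p)))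
          (b * y - (n : ℝ)) := by
      funext y
      simp only [phiJN, ← hA_def, ← hB_def, ← hb_def]
      have harg : (2 : ℝ) ^ (j + (ν : ℤ)) * (x - y) - (p : ℝ)
          = (2 : ℝ) ^ (j + (ν : ℤ)) * x - a * (b * y - (n : ℝ)) - a * n - p := by
        rw [hba]; ring
      rw [harg]; ring
    show (∫ y : ℝ, phiJN φ j n y * phiJN φ (j + ν) p (x - y)) = _
    rw [hfun, integral_comp_mul_sub_aux (fun u : ℝ => (A * B) *
        (φ u * φ ((2 : ℝ) ^ (j + (ν : ℤ)) * x - a * u - a * n - p))) b (n : ℝ),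
      MeasureTheory.integral_const_mul, abs_of_pos (inv_pos.mpr hb)]
    ring
  -- Step 2: rewrite the outer integrand as a function of `2^(j+ν) x - m`
  have hW : (fun x : ℝ => conv (phiJN φ j n) (phiJN φ (j + ν) p) x * phiJN φ (j + ν) m x)
      = fun x : ℝ => (fun z : ℝ => (A * B * b⁻¹ * B) *
          ((∫ t : ℝ, φ t * φ (z - a * t + R)) * φ z))
        ((2 : ℝ) ^ (j + (ν : ℤ)) * x - (m : ℝ)) := by
    funext x
    rw [hconv x]
    simp only [phiJN, ← hB_def]
    have harg : ∀ t : ℝ, (2 : ℝ) ^ (j + (ν : ℤ)) * x - a * t - a * n - (p : ℝ)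
        = ((2 : ℝ) ^ (j + (ν : ℤ)) * x - (m : ℝ)) - a * t + R := by
      intro t; rw [hR]; ring
    simp_rw [harg]
    ring
  rw [hW, integral_comp_mul_sub_aux (fun z : ℝ => (A * B * b⁻¹ * B) *
      ((∫ t : ℝ, φ t * φ (z - a * t + R)) * φ z)) ((2 : ℝ) ^ (j + (ν : ℤ))) (m : ℝ),
    MeasureTheory.integral_const_mul]
  -- Step 3: push φ z inside the inner integral
  have hpush : ∀ z : ℝ, (∫ t : ℝ, φ t * φ (z - a * t + R)) * φ z
      = ∫ t : ℝ, φ t * φ z * φ (z - a * t + R) := by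
    intro z
    rw [← MeasureTheory.integral_mul_const]
    congr 1; funext t; ring
  simp_rw [hpush]
  -- Step 4: Fubini
  have hswap : (∫ z : ℝ, ∫ t : ℝ, φ t * φ z * φ (z - a * t + R))
      = ∫ t : ℝ, ∫ z : ℝ, φ t * φ z * φ (z - a * t + R) := by
    have hint2 := integrable_G_aux φ hφL2.aestronglyMeasurable hφint hC a R
    exact (integral_integral_swap
      (f := fun t z => φ t * φ z * φ (z - a * t + R)) hint2).symm
  rw [hswap]
  have heta : (∫ t : ℝ, ∫ z : ℝ, φ t * φ z * φ (z - a * t + R))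
      = etaNu φ ν (m - p - 2 ^ ν * n) := by
    rw [etaNu, ha_def, hR_def]
  rw [heta]
  -- Step 5: the constant
  have hK : |((2 : ℝ) ^ (j + (ν : ℤ)))⁻¹| * (A * B * b⁻¹ * B)
      = (2 : ℝ) ^ (-(j : ℝ) / 2) := by
    have h2 : (0 : ℝ) < 2 := by norm_num
    rw [abs_of_pos (inv_pos.mpr (by positivity : (0:ℝ) < (2 : ℝ) ^ (j + (ν : ℤ))))]
    rw [show ((2 : ℝ) ^ (j + (ν : ℤ))) = (2 : ℝ) ^ (((j + (ν : ℤ) : ℤ) : ℝ)) from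
      (rpow_intCast 2 _).symm]
    rw [hb_def, show ((2 : ℝ) ^ j) = (2 : ℝ) ^ ((j : ℤ) : ℝ) from (rpow_intCast 2 j).symm]
    rw [hA_def, hB_def, ← rpow_neg h2.le, ← rpow_neg h2.le,
      ← rpow_add h2, ← rpow_add h2, ← rpow_add h2, ← rpow_add h2]
    congr 1
    push_cast
    ring
  rw [← mul_assoc, hK]
end

section
/- Let φ ∈ L²(ℝ) be compactly supported and bounded, ν ∈ ℕ, j ∈ ℤ. Let c : ℤ → ℝ and d : ℤ → ℝ be finitely supported sequences, and set f := Σ_{n∈ℤ} c_n φ_{j,n} and g := Σ_{p∈ℤ} d_p φ_{j+ν,p}. Then for every m ∈ ℤ, ⟨f * g, φ_{j+ν,m}⟩_{L²(ℝ)} = 2^{−j/2} Σ_{n∈ℤ} c_n d_η(m − 2^ν n), where d_η := d * η_ν is the discrete convolution (d * η_ν)(q) = Σ_{p∈ℤ} d_p η_ν(q − p); equivalently, ⟨f * g, φ_{j+ν,m}⟩ = 2^{−j/2} (c ∗_{1/2^ν} d_η)(m), where (x ∗_{1/2^ν} t)(m) := Σ_{n∈ℤ} x(n) t(m − 2^ν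 n). -/
/-!
Statement 5: the wavelet coefficients of a continuous convolution f * g, where
f = Σ c_n φ_{j,n} and g = Σ d_p φ_{j+ν,p}, are given by the fractionally strided
discrete convolution of c with d_η = d * η_ν:
⟨f * g, φ_{j+ν,m}⟩ = 2^{−j/2} Σ_n c_n d_η(m − 2^ν n).
-/

open MeasureTheory Real

lemma affine_qmp (a b : ℝ) (ha : a ≠ 0) :
    Measure.QuasiMeasurePreserving (fun y : ℝ => a * y + b) volume volume := by
  refine ⟨by fun_prop, ?_⟩
  have h : (fun y : ℝ => a * y + b) = (fun y : ℝ => y + b) ∘ (fun y : ℝ => a * y) := rfl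
  rw [h, ← Measure.map_map (by fun_prop) (by fun_prop), Real.map_volume_mul_left ha,
    Measure.map_smul, map_add_right_eq_self]
  intro s hs
  simp [hs]

lemma integral_comp_affine (h : ℝ → ℝ) (a b : ℝ) :
    (∫ x : ℝ, h (a * x - b)) = |a⁻¹| * ∫ x, h x := by
  calc (∫ x : ℝ, h (a * x - b)) = ∫ x : ℝ, (fun t => h (t - b)) (a * x) := rfl
    _ = |a⁻¹| • ∫ t : ℝ, h (t - b) := by
        simpa using MeasureTheory.Measure.integral_comp_mul_left (fun t => h (t - b)) a
    _ = |a⁻¹| * ∫ t, h t := by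
        simp only [sub_eq_add_neg, integral_add_right_eq_self, smul_eq_mul]

lemma integrable_of_bdd_cptsupp {α : Type*} [MeasurableSpace α] [TopologicalSpace α]
    [OpensMeasurableSpace α] {μ : Measure α} [IsFiniteMeasureOnCompacts μ]
    {f : α → ℝ} (hm : AEStronglyMeasurable f μ) (hs : HasCompactSupport f)
    {C : ℝ} (hb : ∀ x, |f x| ≤ C) : Integrable f μ := by
  refine Integrable.mono' (g := Set.indicator (tsupport f) fun _ => C) ?_ hm ?_
  · exact (integrable_indicator_iff (isClosed_tsupport f).measurableSet).2
      (integrableOn_const hs.measure_lt_top.ne)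
  · refine Filter.Eventually.of_forall fun x => ?_
    by_cases hx : x ∈ tsupport f
    · simpa [Set.indicator_of_mem hx, Real.norm_eq_abs] using hb x
    · simp [Set.indicator_of_notMem hx, image_eq_zero_of_notMem_tsupport hx]

lemma phiJN_meas {ψ : ℝ → ℝ} (h : Measurable ψ) (j n : ℤ) : Measurable (phiJN ψ j n) := by
  unfold phiJN; fun_prop

lemma phiJN_hcs {ψ : ℝ → ℝ} (hcs : HasCompactSupport ψ) (j n : ℤ) :
    HasCompactSupport (phiJN ψ j n) := by
  have h2 : ((2:ℝ)^j : ℝ) ≠ 0 := by positivity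
  let e : ℝ ≃ₜ ℝ := (Homeomorph.mulLeft₀ ((2:ℝ)^j) h2).trans (Homeomorph.subRight (n:ℝ))
  have hc : HasCompactSupport (ψ ∘ e) := hcs.comp_isClosedEmbedding e.isClosedEmbedding
  have heq : phiJN ψ j n = (fun _ : ℝ => (2:ℝ)^((j:ℝ)/2)) * (ψ ∘ e) := by
    funext x
    simp [phiJN, e, Homeomorph.trans_apply]
  rw [heq]; exact hc.mul_left

lemma phiJN_bdd {ψ : ℝ → ℝ} {C : ℝ} (hb : ∀ x, |ψ x| ≤ C) (j n : ℤ) :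
    ∀ x, |phiJN ψ j n x| ≤ (2:ℝ)^((j:ℝ)/2) * C := by
  intro x
  have h1 : (0:ℝ) < (2:ℝ)^((j:ℝ)/2) := by positivity
  calc |phiJN ψ j n x| = (2:ℝ)^((j:ℝ)/2) * |ψ ((2:ℝ)^j * x - n)| := by
        rw [phiJN, abs_mul, abs_of_pos h1]
    _ ≤ (2:ℝ)^((j:ℝ)/2) * C := by
        exact mul_le_mul_of_nonneg_left (hb _) h1.le

lemma phiJN_integrable {ψ : ℝ → ℝ} (hm : Measurable ψ) (hcs : HasCompactSupport ψ)
    {C : ℝ} (hb : ∀ x, |ψ x| ≤ C) (j n : ℤ) : Integrable (phiJN ψ j n) volume :=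
  integrable_of_bdd_cptsupp (phiJN_meas hm j n).aestronglyMeasurable (phiJN_hcs hcs j n)
    (phiJN_bdd hb j n)

/-- The 2D integrand appearing in `etaNu` is integrable. -/
lemma eta_integrand_integrable {ψ : ℝ → ℝ} (hm : Measurable ψ) (hcs : HasCompactSupport ψ)
    {C : ℝ} (hb : ∀ x, |ψ x| ≤ C) (ν : ℕ) (r : ℝ) :
    Integrable (Function.uncurry fun z t : ℝ => ψ t * ψ (z - (2:ℝ)^ν * t + r) * ψ z)
      (volume.prod volume) := by
  have hC : 0 ≤ C := (abs_nonneg _).trans (hb 0)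
  refine integrable_of_bdd_cptsupp ?_ ?_ (C := C * C * C) ?_
  · apply Measurable.aestronglyMeasurable
    apply Measurable.mul
    apply Measurable.mul
    · exact hm.comp measurable_snd
    · exact hm.comp (by fun_prop)
    · exact hm.comp measurable_fst
  · apply HasCompactSupport.intro (hcs.prod hcs)
    rintro ⟨z, t⟩ hq
    simp only [Set.mem_prod, not_and_or] at hq
    rcases hq with hz | ht
    · simp [Function.uncurry, image_eq_zero_of_notMem_tsupport hz]
    · simp [Function.uncurry, image_eq_zero_of_notMem_tsupport ht]
  · rintro ⟨z, t⟩
    simp only [Function.uncurry]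
    calc |ψ t * ψ (z - (2:ℝ)^ν * t + r) * ψ z|
        = |ψ t| * |ψ (z - (2:ℝ)^ν * t + r)| * |ψ z| := by rw [abs_mul, abs_mul]
      _ ≤ C * C * C := by
          gcongr <;> [exact hb t; exact hb _; exact hb z]

lemma conv_eq_convolution (f g : ℝ → ℝ) :
    conv f g = MeasureTheory.convolution f g (ContinuousLinearMap.mul ℝ ℝ) volume := rfl

lemma conv_integrable {f g : ℝ → ℝ} (hf : Integrable f volume) (hg : Integrable g volume) :
    Integrable (conv f g) volume := by
  rw [conv_eq_convolution]
  exact hf.integrable_convolution (ContinuousLinearMap.mul ℝ ℝ) hg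

lemma term_eval {ψ : ℝ → ℝ} (hm : Measurable ψ) (hcs : HasCompactSupport ψ)
    {C : ℝ} (hb : ∀ x, |ψ x| ≤ C) (ν : ℕ) (j : ℤ) (n p m : ℤ) :
    (∫ x : ℝ, conv (phiJN ψ j n) (phiJN ψ (j + ν) p) x * phiJN ψ (j + ν) m x)
      = (2:ℝ) ^ (-(j:ℝ)/2) * etaNu ψ ν (m - 2 ^ ν * n - p) := by
  have h2 : (0:ℝ) < 2 := two_pos
  have hba : (2:ℝ)^(j+(ν:ℤ)) = (2:ℝ)^(ν:ℕ) * (2:ℝ)^j := by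
    rw [zpow_add₀ (by norm_num : (2:ℝ) ≠ 0) j (ν:ℤ), zpow_natCast]; ring
  set A : ℝ := (2:ℝ)^((j:ℝ)/2) with hA
  set B : ℝ := (2:ℝ)^(((j+(ν:ℤ) : ℤ):ℝ)/2) with hB
  set r : ℤ := m - 2 ^ ν * n - p with hrdef
  -- step 1 : evaluate the inner convolution integral by an affine substitution
  have step1 : ∀ x : ℝ, conv (phiJN ψ j n) (phiJN ψ (j + ν) p) x
      = |((2:ℝ)^j)⁻¹| * ∫ t : ℝ, A * ψ t *
          (B * ψ ((2:ℝ)^(j+(ν:ℤ)) * x - (2:ℝ)^(ν:ℕ)*t - (2:ℝ)^(ν:ℕ)*(n:ℝ) - (p:ℝ))) := by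
    intro x
    rw [← integral_comp_affine (fun t => A * ψ t *
      (B * ψ ((2:ℝ)^(j+(ν:ℤ)) * x - (2:ℝ)^(ν:ℕ)*t - (2:ℝ)^(ν:ℕ)*(n:ℝ) - (p:ℝ))))
      ((2:ℝ)^j) (n:ℝ)]
    unfold conv
    refine integral_congr_ae (.of_forall fun y => ?_)
    beta_reduce
    simp only [phiJN]
    rw [show (2:ℝ)^(j+(ν:ℤ)) * (x - y) - (p:ℝ)
        = (2:ℝ)^(j+(ν:ℤ)) * x - (2:ℝ)^(ν:ℕ)*((2:ℝ)^j * y - (n:ℝ)) - (2:ℝ)^(ν:ℕ)*(n:ℝ) - (p:ℝ)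
      from by rw [hba]; ring]
  -- step 2 : substitute in the outer integral
  have step2 : (∫ x : ℝ, conv (phiJN ψ j n) (phiJN ψ (j + ν) p) x * phiJN ψ (j + ν) m x)
      = |((2:ℝ)^(j+(ν:ℤ)))⁻¹| * ∫ z : ℝ, |((2:ℝ)^j)⁻¹| * (∫ t : ℝ, A * ψ t *
          (B * ψ (z + (m:ℝ) - (2:ℝ)^(ν:ℕ)*t - (2:ℝ)^(ν:ℕ)*(n:ℝ) - (p:ℝ)))) * (B * ψ z) := by
    rw [← integral_comp_affine (fun z => |((2:ℝ)^j)⁻¹| * (∫ t : ℝ, A * ψ t *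
          (B * ψ (z + (m:ℝ) - (2:ℝ)^(ν:ℕ)*t - (2:ℝ)^(ν:ℕ)*(n:ℝ) - (p:ℝ)))) * (B * ψ z))
      ((2:ℝ)^(j+(ν:ℤ))) (m:ℝ)]
    refine integral_congr_ae (.of_forall fun x => ?_)
    beta_reduce
    rw [step1 x]
    simp only [phiJN]
    have harg : ∀ t : ℝ, ((2:ℝ)^(j+(ν:ℤ)) * x - (m:ℝ)) + (m:ℝ) - (2:ℝ)^(ν:ℕ)*t
          - (2:ℝ)^(ν:ℕ)*(n:ℝ) - (p:ℝ)
        = (2:ℝ)^(j+(ν:ℤ)) * x - (2:ℝ)^(ν:ℕ)*t - (2:ℝ)^(ν:ℕ)*(n:ℝ) - (p:ℝ) := fun t => by ring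
    simp only [harg]
    rfl
  -- step 3 : pull out constants
  have hr : ∀ z t : ℝ, z + (m:ℝ) - (2:ℝ)^(ν:ℕ)*t - (2:ℝ)^(ν:ℕ)*(n:ℝ) - (p:ℝ)
      = z - (2:ℝ)^(ν:ℕ)*t + (r:ℝ) := by
    intro z t; rw [hrdef]; push_cast; ring
  have step3 : (∫ z : ℝ, |((2:ℝ)^j)⁻¹| * (∫ t : ℝ, A * ψ t *
          (B * ψ (z + (m:ℝ) - (2:ℝ)^(ν:ℕ)*t - (2:ℝ)^(ν:ℕ)*(n:ℝ) - (p:ℝ)))) * (B * ψ z))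
      = (|((2:ℝ)^j)⁻¹| * A * B * B) *
          ∫ z : ℝ, (∫ t : ℝ, ψ t * ψ (z - (2:ℝ)^(ν:ℕ)*t + (r:ℝ))) * ψ z := by
    rw [← integral_const_mul]
    refine integral_congr_ae (.of_forall fun z => ?_)
    have hin : (∫ t : ℝ, A * ψ t *
          (B * ψ (z + (m:ℝ) - (2:ℝ)^(ν:ℕ)*t - (2:ℝ)^(ν:ℕ)*(n:ℝ) - (p:ℝ))))
        = (A * B) * ∫ t : ℝ, ψ t * ψ (z - (2:ℝ)^(ν:ℕ)*t + (r:ℝ)) := by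
      rw [← integral_const_mul]
      refine integral_congr_ae (.of_forall fun t => ?_)
      beta_reduce
      rw [hr z t]; ring
    beta_reduce
    rw [hin]; ring
  -- step 4 : Fubini
  have step4 : (∫ z : ℝ, (∫ t : ℝ, ψ t * ψ (z - (2:ℝ)^(ν:ℕ)*t + (r:ℝ))) * ψ z)
      = etaNu ψ ν r := by
    calc (∫ z : ℝ, (∫ t : ℝ, ψ t * ψ (z - (2:ℝ)^(ν:ℕ)*t + (r:ℝ))) * ψ z)
        = ∫ z : ℝ, ∫ t : ℝ, ψ t * ψ (z - (2:ℝ)^(ν:ℕ)*t + (r:ℝ)) * ψ z :=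
          integral_congr_ae (.of_forall fun z => (integral_mul_const _ _).symm)
      _ = ∫ t : ℝ, ∫ z : ℝ, ψ t * ψ (z - (2:ℝ)^(ν:ℕ)*t + (r:ℝ)) * ψ z :=
          integral_integral_swap (eta_integrand_integrable hm hcs hb ν (r:ℝ))
      _ = etaNu ψ ν r := by
          unfold etaNu
          refine integral_congr_ae (.of_forall fun t => ?_)
          refine integral_congr_ae (.of_forall fun z => ?_)
          ring
  have habs : ∀ k : ℤ, |((2:ℝ)^k)⁻¹| = (2:ℝ)^(-(k:ℝ)) := by
    intro k
    rw [abs_of_pos (by positivity), Real.rpow_neg (by norm_num : (0:ℝ) ≤ 2),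
      Real.rpow_intCast]
  have hconst : |((2:ℝ)^(j+(ν:ℤ)))⁻¹| * (|((2:ℝ)^j)⁻¹| * A * B * B) = (2:ℝ)^(-(j:ℝ)/2) := by
    rw [habs j, habs (j+(ν:ℤ)), hA, hB]
    simp only [← Real.rpow_add h2]
    congr 1
    push_cast
    ring
  rw [step2, step3, step4, ← mul_assoc, hconst]

lemma inner_integrable {ψ : ℝ → ℝ} (hm : Measurable ψ) (hcs : HasCompactSupport ψ)
    {C : ℝ} (hb : ∀ x, |ψ x| ≤ C) (j1 j2 : ℤ) (n p : ℤ) (x : ℝ) :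
    Integrable (fun y => phiJN ψ j1 n y * phiJN ψ j2 p (x - y)) volume := by
  have hC : 0 ≤ C := (abs_nonneg _).trans (hb 0)
  refine integrable_of_bdd_cptsupp
    (C := ((2:ℝ)^((j1:ℝ)/2) * C) * ((2:ℝ)^((j2:ℝ)/2) * C)) ?_ ?_ ?_
  · exact ((phiJN_meas hm j1 n).mul
      ((phiJN_meas hm j2 p).comp (by fun_prop : Measurable fun y : ℝ => x - y))).aestronglyMeasurable
  · exact HasCompactSupport.intro (phiJN_hcs hcs j1 n) fun y hy => by
      simp [image_eq_zero_of_notMem_tsupport hy]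
  · intro y
    rw [abs_mul]
    have h1 : (0:ℝ) ≤ (2:ℝ)^((j1:ℝ)/2) * C := by positivity
    exact mul_le_mul (phiJN_bdd hb j1 n y) (phiJN_bdd hb j2 p (x - y)) (abs_nonneg _) h1

lemma conv_mul_integrable {ψ : ℝ → ℝ} (hm : Measurable ψ) (hcs : HasCompactSupport ψ)
    {C : ℝ} (hb : ∀ x, |ψ x| ≤ C) (j1 j2 j3 : ℤ) (n p m : ℤ) :
    Integrable (fun x => conv (phiJN ψ j1 n) (phiJN ψ j2 p) x * phiJN ψ j3 m x) volume := by
  have h1 := conv_integrable (phiJN_integrable hm hcs hb j1 n) (phiJN_integrable hm hcs hb j2 p)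
  have h2 : AEStronglyMeasurable (phiJN ψ j3 m) volume :=
    (phiJN_meas hm j3 m).aestronglyMeasurable
  have h3 : ∃ C', ∀ x, ‖phiJN ψ j3 m x‖ ≤ C' :=
    ⟨(2:ℝ)^((j3:ℝ)/2) * C, fun x => by
      simpa [Real.norm_eq_abs] using phiJN_bdd hb j3 m x⟩
  exact (Integrable.bdd_mul h1 h2 (Filter.Eventually.of_forall h3.choose_spec)).congr (Filter.Eventually.of_forall fun x => mul_comm _ _)

theorem coeff_conv_eq_discrete_strided_conv (φ : ℝ → ℝ) (hφL2 : MemLp φ 2 volume)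
    (hφsupp : HasCompactSupport φ) (hφbdd : ∃ C : ℝ, ∀ x : ℝ, |φ x| ≤ C)
    (ν : ℕ) (j : ℤ)
    (c d : ℤ → ℝ) (hc : (Function.support c).Finite) (hd : (Function.support d).Finite)
    (f g : ℝ → ℝ)
    (hf : f = fun x => ∑ᶠ n : ℤ, c n * phiJN φ j n x)
    (hg : g = fun x => ∑ᶠ p : ℤ, d p * phiJN φ (j + ν) p x)
    (deta : ℤ → ℝ) (hdeta : deta = fun q => ∑ᶠ p : ℤ, d p * etaNu φ ν (q - p)) :
    ∀ m : ℤ,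
      ∫ x : ℝ, conv f g x * phiJN φ (j + ν) m x
        = (2 : ℝ) ^ (-(j : ℝ) / 2) * ∑ᶠ n : ℤ, c n * deta (m - 2 ^ ν * n) := by
  intro m
  obtain ⟨C₀, hC₀⟩ := hφbdd
  have hC0 : 0 ≤ C₀ := (abs_nonneg _).trans (hC₀ 0)
  -- choose a nice (measurable, bounded, compactly supported) representative ψ of φ
  set ψ : ℝ → ℝ := Set.indicator (tsupport φ)
      (fun x => max (-C₀) (min C₀ (hφL2.1.mk φ x))) with hψdef
  have hψmeas : Measurable ψ :=
    (Measurable.max measurable_const (Measurable.min measurable_const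
      hφL2.1.stronglyMeasurable_mk.measurable)).indicator (isClosed_tsupport φ).measurableSet
  have hψcs : HasCompactSupport ψ :=
    HasCompactSupport.intro hφsupp fun x hx => Set.indicator_of_notMem hx _
  have hψbdd : ∀ x, |ψ x| ≤ C₀ := by
    intro x
    rw [hψdef]
    by_cases hx : x ∈ tsupport φ
    · rw [Set.indicator_of_mem hx, abs_le]
      exact ⟨le_max_left _ _, max_le (by linarith) (min_le_left _ _)⟩
    · rw [Set.indicator_of_notMem hx]; simpa using hC0
  have hψae : ψ =ᵐ[volume] φ := by
    filter_upwards [hφL2.1.ae_eq_mk] with x hx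
    rw [hψdef]
    by_cases hmem : x ∈ tsupport φ
    · rw [Set.indicator_of_mem hmem, ← hx]
      have h1 := hC₀ x
      rw [abs_le] at h1
      rw [min_eq_right h1.2, max_eq_right (by linarith [h1.1])]
    · rw [Set.indicator_of_notMem hmem, image_eq_zero_of_notMem_tsupport hmem]
  -- transfer of phiJN along the a.e. equality
  have hphi_ae : ∀ (k q : ℤ), phiJN φ k q =ᵐ[volume] phiJN ψ k q := by
    intro k q
    have hq := (affine_qmp ((2:ℝ)^k) (-(q:ℝ)) (by positivity)).ae_eq_comp hψae.symm
    filter_upwards [hq] with x hx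
    simp only [Function.comp] at hx
    simp only [phiJN, sub_eq_add_neg, hx]
  -- transfer of etaNu
  have heta : ∀ r : ℤ, etaNu φ ν r = etaNu ψ ν r := by
    intro r
    have inner_eq : ∀ t : ℝ, (∫ z : ℝ, φ z * φ (z - (2:ℝ)^ν * t + r))
        = ∫ z : ℝ, ψ z * ψ (z - (2:ℝ)^ν * t + r) := by
      intro t
      have hq := (affine_qmp 1 (-((2:ℝ)^ν * t) + r) one_ne_zero).ae_eq_comp hψae.symm
      refine integral_congr_ae ?_
      filter_upwards [hψae, hq] with z h1 h2
      simp only [Function.comp] at h2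
      rw [show z - (2:ℝ)^ν * t + (r:ℝ) = 1 * z + (-((2:ℝ)^ν * t) + r) by ring, ← h1, h2]
    unfold etaNu
    calc (∫ t : ℝ, ∫ z : ℝ, φ t * φ z * φ (z - (2:ℝ)^ν * t + r))
        = ∫ t : ℝ, φ t * ∫ z : ℝ, φ z * φ (z - (2:ℝ)^ν * t + r) := by
          refine integral_congr_ae (.of_forall fun t => ?_)
          beta_reduce
          rw [← MeasureTheory.integral_const_mul]
          exact integral_congr_ae (.of_forall fun z => by ring)
      _ = ∫ t : ℝ, ψ t * ∫ z : ℝ, ψ z * ψ (z - (2:ℝ)^ν * t + r) := by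
          refine integral_congr_ae ?_
          filter_upwards [hψae] with t ht
          rw [← ht, inner_eq t]
      _ = ∫ t : ℝ, ∫ z : ℝ, ψ t * ψ z * ψ (z - (2:ℝ)^ν * t + r) := by
          refine integral_congr_ae (.of_forall fun t => ?_)
          beta_reduce
          rw [← MeasureTheory.integral_const_mul]
          exact integral_congr_ae (.of_forall fun z => by ring)
  -- finite sums
  set s : Finset ℤ := hc.toFinset with hsdef
  set u : Finset ℤ := hd.toFinset with hudef
  set F : ℝ → ℝ := fun x => ∑ n ∈ s, c n * phiJN ψ j n x with hFdef
  set G : ℝ → ℝ := fun x => ∑ p ∈ u, d p * phiJN ψ (j + ν) p x with hGdef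
  have hfs : ∀ x, f x = ∑ n ∈ s, c n * phiJN φ j n x := by
    intro x; rw [hf]
    refine finsum_eq_finset_sum_of_support_subset _ ?_
    rw [hsdef, Set.Finite.coe_toFinset]
    exact Function.support_mul_subset_left _ _
  have hgs : ∀ x, g x = ∑ p ∈ u, d p * phiJN φ (j + ν) p x := by
    intro x; rw [hg]
    refine finsum_eq_finset_sum_of_support_subset _ ?_
    rw [hudef, Set.Finite.coe_toFinset]
    exact Function.support_mul_subset_left _ _
  have hfae : f =ᵐ[volume] F := by
    have hall : ∀ᵐ x ∂(volume : Measure ℝ), ∀ n ∈ s, phiJN φ j n x = phiJN ψ j n x :=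
      (Filter.eventually_all_finset s).2 fun n _ => hphi_ae j n
    filter_upwards [hall] with x hx
    rw [hfs x, hFdef]
    exact Finset.sum_congr rfl fun n hn => by rw [hx n hn]
  have hgae : g =ᵐ[volume] G := by
    have hall : ∀ᵐ x ∂(volume : Measure ℝ), ∀ p ∈ u, phiJN φ (j+ν) p x = phiJN ψ (j+ν) p x :=
      (Filter.eventually_all_finset u).2 fun p _ => hphi_ae (j+ν) p
    filter_upwards [hall] with x hx
    rw [hgs x, hGdef]
    exact Finset.sum_congr rfl fun p hp => by rw [hx p hp]
  have hconvFG : ∀ x, conv f g x = conv F G x := by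
    intro x
    unfold conv
    refine integral_congr_ae ?_
    have hgy : (fun y => g (x - y)) =ᵐ[volume] fun y => G (x - y) := by
      have hq := (affine_qmp (-1) x (by norm_num)).ae_eq_comp hgae
      filter_upwards [hq] with y hy
      simp only [Function.comp] at hy
      rw [show x - y = -1 * y + x by ring]
      exact hy
    filter_upwards [hfae, hgy] with y h1 h2
    rw [h1, h2]
  have hexp : ∀ x, conv F G x = ∑ q ∈ s ×ˢ u,
      c q.1 * d q.2 * conv (phiJN ψ j q.1) (phiJN ψ (j+ν) q.2) x := by
    intro x
    have hpt : ∀ y : ℝ, F y * G (x - y) = ∑ q ∈ s ×ˢ u,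
        (c q.1 * d q.2) * (phiJN ψ j q.1 y * phiJN ψ (j+ν) q.2 (x - y)) := by
      intro y
      rw [hFdef, hGdef]
      beta_reduce
      rw [Finset.sum_mul_sum, ← Finset.sum_product']
      exact Finset.sum_congr rfl fun q _ => by ring
    calc conv F G x = ∫ y, ∑ q ∈ s ×ˢ u, (c q.1 * d q.2) *
          (phiJN ψ j q.1 y * phiJN ψ (j+ν) q.2 (x - y)) :=
        integral_congr_ae (.of_forall fun y => hpt y)
      _ = ∑ q ∈ s ×ˢ u, ∫ y, (c q.1 * d q.2) *
          (phiJN ψ j q.1 y * phiJN ψ (j+ν) q.2 (x - y)) :=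
        integral_finset_sum _ fun q _ =>
          (inner_integrable hψmeas hψcs hψbdd j (j+ν) q.1 q.2 x).const_mul _
      _ = ∑ q ∈ s ×ˢ u, c q.1 * d q.2 * conv (phiJN ψ j q.1) (phiJN ψ (j+ν) q.2) x := by
        refine Finset.sum_congr rfl fun q _ => ?_
        rw [MeasureTheory.integral_const_mul]
        rfl
  calc (∫ x : ℝ, conv f g x * phiJN φ (j + ν) m x)
      = ∫ x : ℝ, conv F G x * phiJN ψ (j + ν) m x := by
        refine integral_congr_ae ?_
        filter_upwards [hphi_ae (j+ν) m] with x hx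
        rw [hconvFG x, hx]
    _ = ∫ x : ℝ, ∑ q ∈ s ×ˢ u, c q.1 * d q.2 *
          (conv (phiJN ψ j q.1) (phiJN ψ (j+ν) q.2) x * phiJN ψ (j+ν) m x) := by
        refine integral_congr_ae (.of_forall fun x => ?_)
        beta_reduce
        rw [hexp x, Finset.sum_mul]
        exact Finset.sum_congr rfl fun q _ => by ring
    _ = ∑ q ∈ s ×ˢ u, ∫ x : ℝ, c q.1 * d q.2 *
          (conv (phiJN ψ j q.1) (phiJN ψ (j+ν) q.2) x * phiJN ψ (j+ν) m x) :=
        integral_finset_sum _ fun q _ =>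
          (conv_mul_integrable hψmeas hψcs hψbdd j (j+ν) (j+ν) q.1 q.2 m).const_mul _
    _ = ∑ q ∈ s ×ˢ u, c q.1 * d q.2 *
          ((2:ℝ)^(-(j:ℝ)/2) * etaNu ψ ν (m - 2^ν * q.1 - q.2)) := by
        refine Finset.sum_congr rfl fun q _ => ?_
        rw [MeasureTheory.integral_const_mul, term_eval hψmeas hψcs hψbdd ν j q.1 q.2 m]
    _ = (2:ℝ)^(-(j:ℝ)/2) * ∑ n ∈ s, c n * ∑ p ∈ u, d p * etaNu ψ ν (m - 2^ν*n - p) := by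
        rw [Finset.mul_sum, Finset.sum_product]
        refine Finset.sum_congr rfl fun n _ => ?_
        rw [Finset.mul_sum, Finset.mul_sum]
        exact Finset.sum_congr rfl fun p _ => by ring
    _ = (2:ℝ)^(-(j:ℝ)/2) * ∑ᶠ n : ℤ, c n * deta (m - 2^ν*n) := by
        congr 1
        have hsub : Function.support (fun n : ℤ => c n * deta (m - 2^ν*n)) ⊆ ↑s := by
          rw [hsdef, Set.Finite.coe_toFinset]
          exact Function.support_mul_subset_left _ _
        rw [finsum_eq_finset_sum_of_support_subset _ hsub]
        refine Finset.sum_congr rfl fun n _ => ?_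
        congr 1
        rw [hdeta]
        beta_reduce
        have husub : Function.support (fun p : ℤ => d p * etaNu φ ν (m - 2^ν*n - p)) ⊆ ↑u := by
          rw [hudef, Set.Finite.coe_toFinset]
          exact Function.support_mul_subset_left _ _
        rw [finsum_eq_finset_sum_of_support_subset _ husub]
        exact Finset.sum_congr rfl fun p _ => by rw [heta (m - 2^ν*n - p)]
end
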